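/- Let Q = (0,1)^N be the open unit cube in ℝ^N and A, B two N×N real matrices. Let u : ℝ^N → ℝ^N be continuous on the closed cube [0,1]^N, differentiable at every point of Q with derivative Du(x), such that x ↦ tr(Du(x)) is Lebesgue integrable on Q and u(x) = Ax for every x ∈ ∂Q. Then ∫_Q (tr(Du(x)) − tr B)⁺ dx ≥ (tr(A − B))⁺ and ∫_Q (tr(Du(x)) − tr B)⁻ dx ≥ (tr(A − B))⁻, where a⁺ = max(a,0) and a⁻ = max(−a,0). -/

import Mathlib

/-!
By the divergence theorem, `∫_Q tr Du` is the flux of `u` through `∂Q`, so it only depends on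
the boundary values of `u`. Comparing with the linear map `x ↦ A x` gives
`∫_Q (tr Du - tr B) = tr (A - B)`, as `|Q| = 1`, and both bounds follow from
`max (∫ g) 0 ≤ ∫ max g 0` (Jensen for `t ↦ t⁺`) applied to `g = ±(tr Du - tr B)`.
-/

open MeasureTheory

/-- The open unit cube `(0,1)^N` in `ℝ^N`. -/
def openCube (N : ℕ) : Set (Fin N → ℝ) := Set.univ.pi fun _ => Set.Ioo (0 : ℝ) 1

open Set

lemma openCube_ae_eq_Icc (N : ℕ) : openCube N =ᵐ[volume] Icc (0 : Fin N → ℝ) 1 :=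
  Measure.univ_pi_Ioo_ae_eq_Icc

lemma volume_openCube (N : ℕ) : volume (openCube N) = 1 := by
  simp [measure_congr (openCube_ae_eq_Icc N), Real.volume_Icc_pi]

lemma isOpen_openCube (N : ℕ) : IsOpen (openCube N) :=
  isOpen_set_pi finite_univ fun _ _ => isOpen_Ioo

lemma closure_openCube (N : ℕ) : closure (openCube N) = Icc (0 : Fin N → ℝ) 1 := by
  rw [openCube, closure_pi_set, ← pi_univ_Icc]
  simp [closure_Ioo zero_ne_one]

lemma frontier_openCube (N : ℕ) :
    frontier (openCube N) = Icc (0 : Fin N → ℝ) 1 \ openCube N := by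
  rw [frontier, (isOpen_openCube N).interior_eq, closure_openCube]

lemma Fin.insertNth_mem_frontier_openCube {n : ℕ} (i : Fin (n + 1)) {c : ℝ} (hc : c = 0 ∨ c = 1)
    {x : Fin n → ℝ} (hx : x ∈ Icc 0 1) : Fin.insertNth i c x ∈ frontier (openCube (n + 1)) := by
  have hc01 : c ∈ Icc (0 : ℝ) 1 := by rcases hc with rfl | rfl <;> simp
  rw [frontier_openCube]
  refine ⟨Fin.insertNth_mem_Icc.2 ⟨hc01, hx⟩, fun h => ?_⟩
  have := h i (mem_univ i)
  rcases hc with rfl | rfl <;> simp at this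

lemma LinearMap.trace_eq_sum_apply_single {R ι : Type*} [CommRing R] [Fintype ι]
    [DecidableEq ι] (f : (ι → R) →ₗ[R] (ι → R)) :
    LinearMap.trace R (ι → R) f = ∑ i, f (Pi.single i 1) i := by
  simp [LinearMap.trace_eq_matrix_trace R (Pi.basisFun R ι), Matrix.trace]

section DivergenceOnCube

variable {n : ℕ}

lemma integral_trace_fderiv_openCube {u : (Fin (n + 1) → ℝ) → Fin (n + 1) → ℝ}
    {Du : (Fin (n + 1) → ℝ) → (Fin (n + 1) → ℝ) →L[ℝ] (Fin (n + 1) → ℝ)}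
    (hcont : ContinuousOn u (Icc 0 1))
    (hdiff : ∀ x ∈ openCube (n + 1), HasFDerivAt u (Du x) x)
    (hint : IntegrableOn (fun x => LinearMap.trace ℝ _ (Du x).toLinearMap) (openCube (n + 1))) :
    ∫ x in openCube (n + 1), LinearMap.trace ℝ _ (Du x).toLinearMap =
      ∑ i, ((∫ x in Icc (0 : Fin n → ℝ) 1, u (Fin.insertNth i 1 x) i) -
        ∫ x in Icc (0 : Fin n → ℝ) 1, u (Fin.insertNth i 0 x) i) := by
  simp only [setIntegral_congr_set (openCube_ae_eq_Icc _), LinearMap.trace_eq_sum_apply_single,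
    ContinuousLinearMap.coe_coe] at hint ⊢
  exact integral_divergence_of_hasFDerivAt_off_countable 0 1 zero_le_one u Du ∅ countable_empty
    hcont (fun x hx => hdiff x hx.1) (hint.congr_set_ae (openCube_ae_eq_Icc _).symm)

lemma integral_trace_fderiv_openCube_congr {u v : (Fin (n + 1) → ℝ) → Fin (n + 1) → ℝ}
    {Du Dv : (Fin (n + 1) → ℝ) → (Fin (n + 1) → ℝ) →L[ℝ] (Fin (n + 1) → ℝ)}
    (hu : ContinuousOn u (Icc 0 1)) (hv : ContinuousOn v (Icc 0 1))
    (hDu : ∀ x ∈ openCube (n + 1), HasFDerivAt u (Du x) x)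
    (hDv : ∀ x ∈ openCube (n + 1), HasFDerivAt v (Dv x) x)
    (hiu : IntegrableOn (fun x => LinearMap.trace ℝ _ (Du x).toLinearMap) (openCube (n + 1)))
    (hiv : IntegrableOn (fun x => LinearMap.trace ℝ _ (Dv x).toLinearMap) (openCube (n + 1)))
    (huv : EqOn u v (frontier (openCube (n + 1)))) :
    ∫ x in openCube (n + 1), LinearMap.trace ℝ _ (Du x).toLinearMap =
      ∫ x in openCube (n + 1), LinearMap.trace ℝ _ (Dv x).toLinearMap := by
  rw [integral_trace_fderiv_openCube hu hDu hiu, integral_trace_fderiv_openCube hv hDv hiv]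
  refine Finset.sum_congr rfl fun i _ => ?_
  congr 1 <;> refine setIntegral_congr_fun measurableSet_Icc fun x hx => ?_
  · rw [huv (Fin.insertNth_mem_frontier_openCube i (Or.inr rfl) hx)]
  · rw [huv (Fin.insertNth_mem_frontier_openCube i (Or.inl rfl) hx)]

end DivergenceOnCube

theorem integral_trace_fderiv_openCube_eq_trace {N : ℕ} (A : Matrix (Fin N) (Fin N) ℝ)
    {u : (Fin N → ℝ) → Fin N → ℝ} {Du : (Fin N → ℝ) → (Fin N → ℝ) →L[ℝ] (Fin N → ℝ)}
    (hcont : ContinuousOn u (Icc 0 1))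
    (hdiff : ∀ x ∈ openCube N, HasFDerivAt u (Du x) x)
    (hint : IntegrableOn (fun x => LinearMap.trace ℝ _ (Du x).toLinearMap) (openCube N))
    (hbdry : ∀ x ∈ frontier (openCube N), u x = A.mulVec x) :
    ∫ x in openCube N, LinearMap.trace ℝ _ (Du x).toLinearMap = A.trace := by
  cases N with
  | zero => simp [LinearMap.trace_eq_sum_apply_single, Matrix.trace]
  | succ n =>
    set L := LinearMap.toContinuousLinearMap (Matrix.toLin' A)
    calc _ = ∫ _ in openCube (n + 1), LinearMap.trace ℝ _ L.toLinearMap :=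
          integral_trace_fderiv_openCube_congr hcont L.continuous.continuousOn hdiff
            (fun _ _ => L.hasFDerivAt) hint (integrableOn_const (by simp [volume_openCube]))
            (fun x hx => by simp [L, hbdry x hx])
      _ = A.trace := by simp [L, measureReal_def, volume_openCube]

lemma max_integral_le_integral_max_zero {α : Type*} [MeasurableSpace α] {μ : Measure α}
    {f : α → ℝ} (hf : Integrable f μ) : max (∫ x, f x ∂μ) 0 ≤ ∫ x, max (f x) 0 ∂μ :=
  max_le (integral_mono hf hf.pos_part fun _ => le_max_left _ _)
    (integral_nonneg fun _ => le_max_right _ _)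

theorem integral_posPart_negPart_trace_lower_bound_general (N : ℕ)
    (A B : Matrix (Fin N) (Fin N) ℝ)
    (u : (Fin N → ℝ) → Fin N → ℝ)
    (Du : (Fin N → ℝ) → ((Fin N → ℝ) →L[ℝ] (Fin N → ℝ)))
    (hcont : ContinuousOn u (Set.Icc (0 : Fin N → ℝ) 1))
    (hdiff : ∀ x ∈ openCube N, HasFDerivAt u (Du x) x)
    (hint : IntegrableOn
      (fun x => LinearMap.trace ℝ (Fin N → ℝ) (Du x : (Fin N → ℝ) →ₗ[ℝ] (Fin N → ℝ)))
      (openCube N))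
    (hbdry : ∀ x ∈ frontier (openCube N), u x = A.mulVec x) :
    (∫ x in openCube N,
        max (LinearMap.trace ℝ (Fin N → ℝ)
          (Du x : (Fin N → ℝ) →ₗ[ℝ] (Fin N → ℝ)) - B.trace) 0 ≥
      max (Matrix.trace (A - B)) 0) ∧
    (∫ x in openCube N,
        max (-(LinearMap.trace ℝ (Fin N → ℝ)
          (Du x : (Fin N → ℝ) →ₗ[ℝ] (Fin N → ℝ)) - B.trace)) 0 ≥
      max (-(Matrix.trace (A - B))) 0) := by
  have hB : IntegrableOn (fun _ => B.trace) (openCube N) :=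
    integrableOn_const (by simp [volume_openCube])
  have hg : IntegrableOn (fun x => LinearMap.trace ℝ _ (Du x).toLinearMap - B.trace)
      (openCube N) := hint.sub hB
  have hmean :
      ∫ x in openCube N, (LinearMap.trace ℝ _ (Du x).toLinearMap - B.trace) = (A - B).trace := by
    rw [integral_sub hint hB, integral_trace_fderiv_openCube_eq_trace A hcont hdiff hint hbdry]
    simp [measureReal_def, volume_openCube, Matrix.trace_sub]
  constructor
  · rw [ge_iff_le, ← hmean]
    exact max_integral_le_integral_max_zero hg
  · rw [ge_iff_le, ← hmean, ← integral_neg]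
    exact max_integral_le_integral_max_zero hg.neg

/-- Lower bounds for the relaxed bulk densities of the purely interfacial energies
`Ψ^±`: for any jump-free competitor `u` as in the cell formula (continuous on the
closed cube, differentiable on `Q = (0,1)^N`, `tr(Du)` integrable, `u = Ax` on `∂Q`),
`∫_Q (tr(Du x) − tr B)⁺ dx ≥ (tr(A−B))⁺` and `∫_Q (tr(Du x) − tr B)⁻ dx ≥ (tr(A−B))⁻`,
where `a⁺ = max a 0` and `a⁻ = max (−a) 0`. -/
theorem integral_posPart_negPart_trace_lower_bound (N : ℕ) (hN : 1 ≤ N)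
    (A B : Matrix (Fin N) (Fin N) ℝ)
    (u : (Fin N → ℝ) → Fin N → ℝ)
    (Du : (Fin N → ℝ) → ((Fin N → ℝ) →L[ℝ] (Fin N → ℝ)))
    (hcont : ContinuousOn u (Set.Icc (0 : Fin N → ℝ) 1))
    (hdiff : ∀ x ∈ openCube N, HasFDerivAt u (Du x) x)
    (hint : IntegrableOn
      (fun x => LinearMap.trace ℝ (Fin N → ℝ) (Du x : (Fin N → ℝ) →ₗ[ℝ] (Fin N → ℝ)))
      (openCube N))
    (hbdry : ∀ x ∈ frontier (openCube N), u x = A.mulVec x) :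
    (∫ x in openCube N,
        max (LinearMap.trace ℝ (Fin N → ℝ)
          (Du x : (Fin N → ℝ) →ₗ[ℝ] (Fin N → ℝ)) - B.trace) 0 ≥
      max (Matrix.trace (A - B)) 0) ∧
    (∫ x in openCube N,
        max (-(LinearMap.trace ℝ (Fin N → ℝ)
          (Du x : (Fin N → ℝ) →ₗ[ℝ] (Fin N → ℝ)) - B.trace)) 0 ≥
      max (-(Matrix.trace (A - B))) 0) :=
  integral_posPart_negPart_trace_lower_bound_general N A B u Du hcont hdiff hint hbdry
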